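/- arXiv:1908.06789 — 4 statements merged into one kernel-verified Lean document; each statement's English description precedes it below -/
import Mathlib

section
/- For every integer n ≥ 0, σmex(n) = Σ_{k ≥ 0} p(n − k(k+1)/2), where p is the partition function and terms with negative argument are zero. -/
open scoped Classical

/-- The minimal excludant of a partition: the least positive integer not a part. -/
noncomputable def Nat.Partition.mex {n : ℕ} (l : n.Partition) : ℕ :=
  sInf {k : ℕ | 0 < k ∧ k ∉ l.parts}

/-- Sum of minimal excludants over all partitions of `n`. -/
noncomputable def sigmaMex (n : ℕ) : ℕ := ∑ l : Nat.Partition n, l.mex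

/-- `sigmaMex` extended to ℤ by zero on negatives. -/
noncomputable def sigmaMexZ (n : ℤ) : ℤ := if 0 ≤ n then sigmaMex n.toNat else 0

/-- The partition function, extended to ℤ by zero on negatives. -/
noncomputable def partitionsZ (n : ℤ) : ℤ :=
  if 0 ≤ n then Fintype.card (Nat.Partition n.toNat) else 0

/-- `M_k(n)`: partitions of `n` whose mex is `k` with more parts `> k` than parts `< k`. -/
noncomputable def Mfun (k n : ℕ) : ℕ :=
  Nat.card {l : Nat.Partition n //
    l.mex = k ∧ (l.parts.filter fun t => t < k).card < (l.parts.filter fun t => k < t).card}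

noncomputable def MfunZ (k : ℕ) (n : ℤ) : ℤ := if 0 ≤ n then Mfun k n.toNat else 0

/-- A multiset of colored parts is a colored partition of `n`. -/
def IsColoredPartition {c : ℕ} (n : ℕ) (m : Multiset (ℕ × Fin c)) : Prop :=
  (∀ p ∈ m, 0 < p.1) ∧ (m.map Prod.fst).sum = n

/-- Number of partitions of `n` into distinct two-colored parts. -/
noncomputable def D2 (n : ℕ) : ℕ :=
  Nat.card {m : Multiset (ℕ × Fin 2) // IsColoredPartition n m ∧ m.Nodup}

/-- Number of partitions of `n` into distinct parts. -/
def D1 (n : ℕ) : ℕ := (Nat.Partition.distincts n).card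

/-- Indicator of triangular numbers. -/
noncomputable def deltaTri (n : ℤ) : ℤ := if ∃ m : ℤ, 2 * n = m * (m + 1) then 1 else 0

/-- `δ'(n) = (-1)^m` if `n = m(3m-1)` for some integer `m`, else `0`. -/
noncomputable def deltaPent (n : ℤ) : ℤ :=
  ∑' m : ℤ, if n = m * (3 * m - 1) then (if Even m then (1 : ℤ) else -1) else 0

/-- Overpartition: positive parts summing to `n`, overlined (`true`) parts occur at most once
per size. -/
def IsOverpartition (n : ℕ) (m : Multiset (ℕ × Bool)) : Prop :=
  (∀ p ∈ m, 0 < p.1) ∧ (m.map Prod.fst).sum = n ∧ ∀ s : ℕ, m.count (s, true) ≤ 1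

/-- Overpartitions of `n` in which the largest part size exceeding `k` appears at least
`k+1` times. -/
noncomputable def Mbar (k n : ℕ) : ℕ :=
  Nat.card {m : Multiset (ℕ × Bool) // IsOverpartition n m ∧
    ∃ s ∈ m.map Prod.fst, k < s ∧ (∀ t ∈ m.map Prod.fst, k < t → t ≤ s) ∧
      k + 1 ≤ (m.map Prod.fst).count s}

noncomputable def MbarZ (k : ℕ) (n : ℤ) : ℤ := if 0 ≤ n then Mbar k n.toNat else 0

/-- `D₂*(n)`: two-colored distinct partitions with gap-free color-0 parts and even
color-1 parts. -/
noncomputable def D2star (n : ℕ) : ℕ :=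
  Nat.card {m : Multiset (ℕ × Fin 2) // IsColoredPartition n m ∧ m.Nodup ∧
    (∃ j : ℕ, (m.filter fun p => p.2 = 0).map Prod.fst = (Multiset.range j).map (· + 1)) ∧
    ∀ p ∈ m, p.2 = 1 → Even p.1}

/-- Partitions of `n` in which odd parts are not repeated. -/
noncomputable def pod (n : ℕ) : ℕ :=
  Nat.card {l : Nat.Partition n // ∀ t : ℕ, Odd t → l.parts.count t ≤ 1}

/-- `MP_k(n)`: partitions where the largest part exceeding `2k-1` is odd and appears
exactly `k` times, all other odd parts appearing at most once. -/
noncomputable def MPfun (k n : ℕ) : ℕ :=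
  Nat.card {l : Nat.Partition n // ∃ s ∈ l.parts, 2 * k - 1 < s ∧
    (∀ t ∈ l.parts, 2 * k - 1 < t → t ≤ s) ∧ Odd s ∧ l.parts.count s = k ∧
    ∀ t ∈ l.parts, Odd t → t ≠ s → l.parts.count t ≤ 1}

/-- The `r`-gap of a partition: least positive integer appearing fewer than `r` times. -/
noncomputable def Nat.Partition.rgap {n : ℕ} (r : ℕ) (l : n.Partition) : ℕ :=
  sInf {k : ℕ | 0 < k ∧ l.parts.count k < r}

/-- Sum of the `r`-gaps of all partitions of `n`. -/
noncomputable def sigmaMexR (r n : ℕ) : ℕ := ∑ l : Nat.Partition n, l.rgap r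

/-- Two-colored partitions: color-0 parts distinct and divisible by `r`; each color-1
part size occurs at most `2r-1` times. -/
noncomputable def Dtilde (r n : ℕ) : ℕ :=
  Nat.card {m : Multiset (ℕ × Fin 2) // IsColoredPartition n m ∧
    (m.filter fun p => p.2 = 0).Nodup ∧ (∀ p ∈ m, p.2 = 0 → r ∣ p.1) ∧
    ∀ s : ℕ, m.count (s, 1) ≤ 2 * r - 1}

/-- `D₁(x/2)` when `x` is a non-negative even integer, `0` otherwise. -/
noncomputable def D1half (x : ℤ) : ℤ := if 0 ≤ x ∧ 2 ∣ x then D1 (x / 2).toNat else 0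

/-- `j = |r| - 1/2 + sign(r)·(-1)^r/2`. -/
def jOf (r : ℤ) : ℤ :=
  if 0 ≤ r then (if Even r then r else r - 1) else (if Even r then -r - 1 else -r)

/-- `D₃^{(k)}(n)`: three-colored distinct partitions satisfying the conditions of
Proposition 3.2. -/
noncomputable def D3 (k n : ℕ) : ℕ :=
  Nat.card {m : Multiset (ℕ × Fin 3) // IsColoredPartition n m ∧ m.Nodup ∧
    (m.filter fun p => p.2 = 2).card = k ∧
    (1 < k → ∀ a ∈ (m.filter fun p => p.2 = 2).map Prod.fst,
        ∀ b ∈ (m.filter fun p => p.2 = 2).map Prod.fst, b < 2 * a) ∧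
    ∃ a b : ℕ,
      a ∈ (m.filter fun p => (p.2 : ℕ) =
        (jOf (((m.filter fun q => q.2 = 0).card : ℤ) -
          ((m.filter fun q => q.2 = 1).card : ℤ)) % 2).toNat).map Prod.fst ∧
      (∀ t ∈ (m.filter fun p => (p.2 : ℕ) =
        (jOf (((m.filter fun q => q.2 = 0).card : ℤ) -
          ((m.filter fun q => q.2 = 1).card : ℤ)) % 2).toNat).map Prod.fst, t ≤ a) ∧
      b ∈ (m.filter fun p => p.2 = 2).map Prod.fst ∧
      (∀ t ∈ (m.filter fun p => p.2 = 2).map Prod.fst, b ≤ t) ∧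
      (a : ℤ) = jOf (((m.filter fun q => q.2 = 0).card : ℤ) -
          ((m.filter fun q => q.2 = 1).card : ℤ)) + b}

/-!
`mex λ` is the number of `k ≥ 0` with `{1, …, k} ⊆ λ`, and deleting the parts `1, …, k` is a
bijection from the partitions of `n` containing them onto the partitions of `n - k(k+1)/2`.
Summing over `λ` and exchanging the two sums gives the identity.
-/

open Finset

lemma Multiset.two_mul_sum_Icc_one (k : ℕ) : 2 * (Multiset.Icc 1 k).sum = k * (k + 1) := by
  have hfin : (Multiset.Icc 1 k).sum = ∑ i ∈ Finset.Icc 1 k, i := by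
    rw [Finset.sum, Multiset.map_id']
    rfl
  rw [hfin]
  clear hfin
  induction k with
  | zero => rfl
  | succ k ih =>
    rw [sum_Icc_succ_top (by omega), mul_add, ih]
    ring

namespace Nat.Partition

variable {n : ℕ}

lemma succ_notMem_parts (l : n.Partition) : n + 1 ∉ l.parts :=
  fun h => (le_of_mem_parts h).not_gt n.lt_succ_self

lemma mex_pos_and_notMem_parts (l : n.Partition) : 0 < l.mex ∧ l.mex ∉ l.parts :=
  Nat.sInf_mem (s := {k | 0 < k ∧ k ∉ l.parts}) ⟨n + 1, n.succ_pos, l.succ_notMem_parts⟩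

lemma mex_le_succ (l : n.Partition) : l.mex ≤ n + 1 :=
  Nat.sInf_le ⟨n.succ_pos, l.succ_notMem_parts⟩

lemma Icc_le_parts_iff_lt_mex (l : n.Partition) (k : ℕ) :
    Multiset.Icc 1 k ≤ l.parts ↔ k < l.mex := by
  rw [Multiset.le_iff_subset Multiset.nodup_Icc]
  constructor
  · intro h
    by_contra! hk
    obtain ⟨hmex_pos, hmex_notMem⟩ := l.mex_pos_and_notMem_parts
    exact hmex_notMem (h (Multiset.mem_Icc.2 ⟨hmex_pos, hk⟩))
  · intro hk j hj
    obtain ⟨hj_pos, hjk⟩ := Multiset.mem_Icc.1 hj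
    by_contra hj_parts
    exact Nat.notMem_of_lt_sInf (by omega : j < l.mex) ⟨hj_pos, hj_parts⟩

lemma mex_eq_card_filter (l : n.Partition) :
    l.mex = #{k ∈ range (n + 1) | Multiset.Icc 1 k ≤ l.parts} := by
  have hfilter : {k ∈ range (n + 1) | Multiset.Icc 1 k ≤ l.parts} = range l.mex := by
    ext k
    simp only [mem_filter, mem_range, Icc_le_parts_iff_lt_mex]
    have := l.mex_le_succ
    omega
  rw [hfilter, card_range]

lemma sum_le_of_le_parts {s : Multiset ℕ} (l : n.Partition) (h : s ≤ l.parts) : s.sum ≤ n := by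
  obtain ⟨t, ht⟩ := Multiset.le_iff_exists_add.1 h
  rw [← l.parts_sum, ht, Multiset.sum_add]
  exact Nat.le_add_right _ _

def subtypeLePartsEquiv (s : Multiset ℕ) (hs : ∀ i ∈ s, 0 < i) (hsn : s.sum ≤ n) :
    {l : n.Partition // s ≤ l.parts} ≃ (n - s.sum).Partition where
  toFun l :=
    { parts := l.1.parts - s
      parts_pos := fun hi => l.1.parts_pos (Multiset.mem_of_le tsub_le_self hi)
      parts_sum := by
        have h := congrArg Multiset.sum (tsub_add_cancel_of_le l.2)
        rw [Multiset.sum_add, l.1.parts_sum] at h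
        omega }
  invFun m :=
    ⟨{ parts := m.parts + s
       parts_pos := fun hi => (Multiset.mem_add.1 hi).elim m.parts_pos (hs _)
       parts_sum := by rw [Multiset.sum_add, m.parts_sum]; omega },
      Multiset.le_add_left _ _⟩
  left_inv l := Subtype.ext <| Nat.Partition.ext <| tsub_add_cancel_of_le l.2
  right_inv m := Nat.Partition.ext <| add_tsub_cancel_right _ _

lemma card_subtype_le_parts (s : Multiset ℕ) (hs : ∀ i ∈ s, 0 < i) :
    (Fintype.card {l : n.Partition // s ≤ l.parts} : ℤ) = partitionsZ ((n : ℤ) - s.sum) := by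
  unfold partitionsZ
  by_cases hsn : s.sum ≤ n
  · rw [if_pos (by omega), Fintype.card_congr (subtypeLePartsEquiv s hs hsn),
      show ((n : ℤ) - s.sum).toNat = n - s.sum by omega]
  · rw [if_neg (by omega), Fintype.card_eq_zero_iff.2 ⟨fun l => hsn (sum_le_of_le_parts l.1 l.2)⟩]
    rfl

end Nat.Partition

theorem stmt1 (n : ℕ) : (sigmaMex n : ℤ) = ∑' k : ℕ, partitionsZ ((n : ℤ) - k * (k + 1) / 2) := by
  have htri (k : ℕ) : (k : ℤ) * (k + 1) / 2 = (Multiset.Icc 1 k).sum := by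
    rw [← Int.mul_ediv_cancel_left ((Multiset.Icc 1 k).sum : ℤ) two_ne_zero]
    exact_mod_cast congrArg (· / 2) (Multiset.two_mul_sum_Icc_one k).symm
  have hvanish : ∀ k ∉ range (n + 1), partitionsZ ((n : ℤ) - k * (k + 1) / 2) = 0 := by
    intro k hk
    have hk : n < k := by simpa using hk
    have hsum : n < (Multiset.Icc 1 k).sum := by
      nlinarith [Multiset.two_mul_sum_Icc_one k]
    rw [htri, partitionsZ, if_neg (by omega)]
  rw [tsum_eq_sum hvanish]
  have hswap : sigmaMex n =
      ∑ k ∈ range (n + 1), Fintype.card {l : n.Partition // Multiset.Icc 1 k ≤ l.parts} := by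
    simp only [sigmaMex, Nat.Partition.mex_eq_card_filter, Fintype.card_subtype, card_filter]
    exact sum_comm
  simp only [hswap, Nat.cast_sum, htri]
  exact sum_congr rfl fun k _ => Nat.Partition.card_subtype_le_parts _
    fun i hi => (Multiset.mem_Icc.1 hi).1
end

section
/- For every integer n ≥ 0, Σ_{j ≥ 0} D₁((n − j(j+1)/2)/2) = D₂*(n), where D₁ is applied only when its argument is a non-negative integer (else the term is 0). -/
open scoped Classical

/-! The color-0 parts of a `D₂*`-partition of `n` form the staircase `{1, …, j}`, of size
`j(j+1)/2`, and halving its (even, distinct) color-1 parts gives a partition of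
`(n - j(j+1)/2) / 2` into distinct parts. This is a bijection onto pairs `(j, q)`, so counting by
`j` gives the sum; terms with `j > n` vanish because then `j(j+1)/2 > n`. -/

open Multiset

def staircase (j : ℕ) : Multiset ℕ := (range j).map (· + 1)

lemma card_staircase (j : ℕ) : card (staircase j) = j := by
  simp [staircase]

lemma pos_of_mem_staircase {j a : ℕ} (ha : a ∈ staircase j) : 0 < a := by
  obtain ⟨i, -, rfl⟩ := mem_map.1 ha
  exact i.succ_pos

lemma nodup_staircase (j : ℕ) : (staircase j).Nodup :=
  (nodup_range j).map (add_left_injective 1)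

lemma two_mul_sum_staircase (j : ℕ) : 2 * (staircase j).sum = j * (j + 1) := by
  induction j with
  | zero => rfl
  | succ j ih =>
    rw [staircase, range_succ, map_cons, sum_cons, ← staircase]
    linarith

lemma le_sum_staircase (j : ℕ) : j ≤ (staircase j).sum := by
  simpa [card_staircase] using card_nsmul_le_sum (s := staircase j) (a := 1)
    fun _ ha => pos_of_mem_staircase ha

lemma cast_sum_staircase (j : ℕ) : ((staircase j).sum : ℤ) = j * (j + 1) / 2 := by
  have h : (2 * (staircase j).sum : ℤ) = j * (j + 1) := mod_cast two_mul_sum_staircase j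
  rw [← h]
  omega

section Colored

variable {α : Type*}

def colored (a b : Multiset α) : Multiset (α × Fin 2) := a.map (·, 0) + b.map (·, 1)

def colorPart (c : Fin 2) (m : Multiset (α × Fin 2)) : Multiset α :=
  (m.filter (·.2 = c)).map Prod.fst

lemma colorPart_zero_colored (a b : Multiset α) : colorPart 0 (colored a b) = a := by
  simp [colorPart, colored, filter_map]

lemma colorPart_one_colored (a b : Multiset α) : colorPart 1 (colored a b) = b := by
  simp [colorPart, colored, filter_map]

lemma forall_mem_colored {a b : Multiset α} {P : α × Fin 2 → Prop} :
    (∀ p ∈ colored a b, P p) ↔ (∀ x ∈ a, P (x, 0)) ∧ ∀ x ∈ b, P (x, 1) := by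
  simp [colored, or_imp, forall_and]

lemma colored_colorPart (m : Multiset (α × Fin 2)) :
    colored (colorPart 0 m) (colorPart 1 m) = m := by
  have h : ∀ c : Fin 2, (colorPart c m).map (·, c) = m.filter (·.2 = c) := fun c => by
    rw [colorPart, map_map]
    conv_rhs => rw [← map_id (m.filter _)]
    exact map_congr rfl fun p hp => by simp [← (mem_filter.1 hp).2]
  rw [colored, h, h]
  conv_rhs => rw [← filter_add_not (·.2 = 0) m]
  congr 1
  exact filter_congr fun p _ => (by decide : ∀ c : Fin 2, c = 1 ↔ ¬c = 0) p.2

lemma map_fst_colored (a b : Multiset α) : (colored a b).map Prod.fst = a + b := by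
  simp [colored, map_map]

lemma nodup_colored_iff {a b : Multiset α} : (colored a b).Nodup ↔ a.Nodup ∧ b.Nodup := by
  rw [colored, nodup_add, nodup_map_iff_of_injective (Prod.mk_left_injective 0),
    nodup_map_iff_of_injective (Prod.mk_left_injective 1)]
  refine ⟨fun h => ⟨h.1, h.2.1⟩, fun h => ⟨h.1, h.2, ?_⟩⟩
  simp [disjoint_left]

end Colored

def DistinctHalves (x : ℤ) : Type :=
  {q : Multiset ℕ // q.Nodup ∧ (∀ a ∈ q, 0 < a) ∧ 2 * (q.sum : ℤ) = x}

def distinctHalvesEquiv (k : ℕ) :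
    DistinctHalves (2 * k) ≃ {p : k.Partition // p ∈ Nat.Partition.distincts k} where
  toFun q := ⟨⟨q.1, q.2.2.1 _, by have := q.2.2.2; omega⟩,
    by simpa [Nat.Partition.distincts] using q.2.1⟩
  invFun p := ⟨p.1.parts, by simpa [Nat.Partition.distincts] using p.2,
    fun _ => p.1.parts_pos, by rw [p.1.parts_sum]⟩
  left_inv _ := rfl
  right_inv _ := rfl

lemma isEmpty_distinctHalves {x : ℤ} (hx : ¬(0 ≤ x ∧ 2 ∣ x)) :
    IsEmpty (DistinctHalves x) :=
  ⟨fun q => hx ⟨by have := q.2.2.2; omega, q.1.sum, q.2.2.2.symm⟩⟩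

lemma exists_eq_two_mul {x : ℤ} (hx : 0 ≤ x ∧ 2 ∣ x) : ∃ k : ℕ, x = 2 * k :=
  ⟨(x / 2).toNat, by omega⟩

instance (x : ℤ) : Finite (DistinctHalves x) := by
  by_cases hx : 0 ≤ x ∧ 2 ∣ x
  · obtain ⟨k, rfl⟩ := exists_eq_two_mul hx
    exact Finite.of_equiv _ (distinctHalvesEquiv k).symm
  · have := isEmpty_distinctHalves hx
    infer_instance

lemma D1half_eq_card (x : ℤ) : D1half x = Nat.card (DistinctHalves x) := by
  by_cases hx : 0 ≤ x ∧ 2 ∣ x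
  · obtain ⟨k, rfl⟩ := exists_eq_two_mul hx
    rw [D1half, if_pos hx, show (2 * (k : ℤ) / 2).toNat = k by omega, D1,
      ← Nat.card_eq_finsetCard, ← Nat.card_congr (distinctHalvesEquiv k)]
  · have := isEmpty_distinctHalves hx
    rw [D1half, if_neg hx, Nat.card_of_isEmpty, Nat.cast_zero]

lemma D1half_of_neg {x : ℤ} (hx : x < 0) : D1half x = 0 :=
  if_neg fun h => h.1.not_gt hx

def IsD2starPartition (n : ℕ) (m : Multiset (ℕ × Fin 2)) : Prop :=
  IsColoredPartition n m ∧ m.Nodup ∧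
    (∃ j, colorPart 0 m = staircase j) ∧
    ∀ p ∈ m, p.2 = 1 → Even p.1

lemma D2star_eq_card (n : ℕ) : D2star n = Nat.card {m // IsD2starPartition n m} := rfl

lemma isD2starPartition_colored_iff {n j : ℕ} {q : Multiset ℕ} :
    IsD2starPartition n (colored (staircase j) (q.map (2 * ·))) ↔
      q.Nodup ∧ (∀ a ∈ q, 0 < a) ∧ 2 * (q.sum : ℤ) = n - (staircase j).sum := by
  rw [IsD2starPartition, IsColoredPartition, forall_mem_colored, forall_mem_colored,
    map_fst_colored, nodup_colored_iff, sum_add, sum_map_mul_left, map_id']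
  constructor
  · rintro ⟨⟨⟨-, hpos⟩, hsum⟩, ⟨-, hnd⟩, -⟩
    refine ⟨hnd.of_map _, fun a ha => ?_, by omega⟩
    have := hpos _ (mem_map_of_mem _ ha)
    omega
  · rintro ⟨hnd, hpos, hsum⟩
    refine ⟨⟨⟨fun _ => pos_of_mem_staircase, ?_⟩, by omega⟩,
      ⟨nodup_staircase j, hnd.map (mul_right_injective₀ two_ne_zero)⟩,
      ⟨j, colorPart_zero_colored _ _⟩, fun _ _ h => (zero_ne_one h).elim, ?_⟩
    all_goals
      rintro _ hx
      obtain ⟨a, ha, rfl⟩ := mem_map.1 hx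
    · have := hpos a ha
      omega
    · exact fun _ => even_two_mul a

lemma exists_colored_of_isD2starPartition {n : ℕ} {m : Multiset (ℕ × Fin 2)}
    (hm : IsD2starPartition n m) :
    ∃ j, ∃ q : Multiset ℕ, colored (staircase j) (q.map (2 * ·)) = m := by
  obtain ⟨-, -, ⟨j, hj⟩, heven⟩ := hm
  refine ⟨j, (colorPart 1 m).map (· / 2), ?_⟩
  conv_rhs => rw [← colored_colorPart m]
  congr 1
  · exact hj.symm
  · rw [map_map]
    conv_rhs => rw [← map_id (colorPart 1 m)]
    refine map_congr rfl fun a ha => ?_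
    obtain ⟨p, hp, rfl⟩ := mem_map.1 ha
    have hp := mem_filter.1 hp
    exact Nat.mul_div_cancel' (heven p hp.1 hp.2).two_dvd

def staircaseDoubles (n : ℕ) (x : Σ j : Fin (n + 1), DistinctHalves (n - (staircase j).sum)) :
    {m // IsD2starPartition n m} :=
  ⟨colored (staircase x.1) (x.2.1.map (2 * ·)), isD2starPartition_colored_iff.2 x.2.2⟩

lemma staircaseDoubles_bijective (n : ℕ) : Function.Bijective (staircaseDoubles n) := by
  constructor
  · rintro ⟨j, q, hq⟩ ⟨j', q', hq'⟩ h
    replace h : colored (staircase j) (q.map (2 * ·)) = colored (staircase j') (q'.map (2 * ·)) :=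
      congrArg Subtype.val h
    obtain rfl : j = j' := Fin.ext <| by
      simpa [card_staircase, colorPart_zero_colored] using congrArg (card ∘ colorPart 0) h
    obtain rfl : q = q' := map_injective (mul_right_injective₀ two_ne_zero) <| by
      simpa [colorPart_one_colored] using congrArg (colorPart 1) h
    rfl
  · rintro ⟨m, hm⟩
    obtain ⟨j, q, rfl⟩ := exists_colored_of_isD2starPartition hm
    have hq := isD2starPartition_colored_iff.1 hm
    have hj : j < n + 1 := by
      have := le_sum_staircase j
      omega
    exact ⟨⟨⟨j, hj⟩, q, hq⟩, rfl⟩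

theorem stmt11 (n : ℕ) :
    ∑' j : ℕ, D1half ((n : ℤ) - j * (j + 1) / 2) = (D2star n : ℤ) := by
  have hvanish : ∀ j ∉ Finset.range (n + 1), D1half ((n : ℤ) - j * (j + 1) / 2) = 0 := by
    intro j hj
    rw [Finset.mem_range, not_lt] at hj
    have := le_sum_staircase j
    rw [← cast_sum_staircase]
    exact D1half_of_neg (by omega)
  rw [tsum_eq_sum hvanish, D2star_eq_card,
    ← Nat.card_eq_of_bijective _ (staircaseDoubles_bijective n), Nat.card_sigma, Nat.cast_sum,
    Fin.sum_univ_eq_sum_range (fun j => (Nat.card (DistinctHalves (n - (staircase j).sum)) : ℤ))]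
  exact Finset.sum_congr rfl fun j _ => by rw [← cast_sum_staircase, D1half_eq_card]
end

section
/- The number of partitions of a non-negative integer n into distinct parts, q(n), is odd if and only if n = j(3j±1)/2 for some non-negative integer j (i.e., n is a generalized pentagonal number). -/
open scoped Classical

/-! Modulo 2 the generating function `∏ (1 + X^k)` of `D1` equals `∏ (1 - X^k)`, which by Euler's
pentagonal number theorem is `∑ₖ (-1)^k X^(k(3k-1)/2)`; since `k ↦ k(3k-1)/2` is injective on `ℤ`,
its coefficients are nonzero exactly at the generalized pentagonal numbers. -/

open Finset PowerSeries Nat.Partition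
open scoped PowerSeries.WithPiTopology

theorem Nat.Partition.powerSeriesMk_card_distincts_eq_pentagonalSeries
    (R : Type*) [CommRing R] [CharP R 2] :
    PowerSeries.mk (fun n ↦ (#(distincts n) : R)) = pentagonalSeries R := by
  let _ : TopologicalSpace R := ⊥
  have _ : DiscreteTopology R := ⟨rfl⟩
  have _ : CharP R⟦X⟧ 2 := charP_of_injective_ringHom C_injective 2
  simp_rw [← countRestricted_two]
  rw [powerSeriesMk_card_countRestricted_eq_tprod R (m := 2) (by norm_num),
    ← WithPiTopology.tprod_one_sub_X_pow]
  refine tprod_congr fun i ↦ ?_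
  rw [sum_range_succ, sum_range_one, CharTwo.sub_eq_add]
  simp

theorem pentagonal_natCast (j : ℕ) : pentagonal j = j * (3 * j - 1) / 2 := by
  rcases j.eq_zero_or_pos with rfl | hj
  · rfl
  · rw [pentagonal_def, ← Int.toNat_natCast (j * (3 * j - 1) / 2)]
    push_cast [Int.natCast_div, Nat.cast_sub (by omega : 1 ≤ 3 * j)]
    rfl

theorem pentagonal_neg_natCast (j : ℕ) : pentagonal (-j) = j * (3 * j + 1) / 2 := by
  rw [pentagonal_neg, ← Int.toNat_natCast (j * (3 * j + 1) / 2)]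
  push_cast [Int.natCast_div]
  rfl

theorem mem_range_pentagonal_iff {n : ℕ} :
    n ∈ Set.range pentagonal ↔ ∃ j : ℕ, n = j * (3 * j + 1) / 2 ∨ n = j * (3 * j - 1) / 2 := by
  constructor
  · rintro ⟨k, rfl⟩
    obtain ⟨j, rfl | rfl⟩ := k.eq_nat_or_neg
    · exact ⟨j, .inr (pentagonal_natCast j)⟩
    · exact ⟨j, .inl (pentagonal_neg_natCast j)⟩
  · rintro ⟨j, rfl | rfl⟩
    · exact ⟨-j, pentagonal_neg_natCast j⟩
    · exact ⟨j, pentagonal_natCast j⟩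

theorem stmt17 (n : ℕ) :
    Odd (D1 n) ↔ ∃ j : ℕ, n = j * (3 * j + 1) / 2 ∨ n = j * (3 * j - 1) / 2 := by
  have hcoeff : (D1 n : ZMod 2) = (pentagonalSeries (ZMod 2)).coeff n := by
    rw [← powerSeriesMk_card_distincts_eq_pentagonalSeries, coeff_mk, D1]
  rw [← ZMod.natCast_ne_zero_iff_odd, hcoeff, Ne, coeff_pentagonalSeries_eq_zero_iff, not_not,
    mem_range_pentagonal_iff]
end

section
/- If n is odd, then D₂(n), the number of two-colored partitions of n into distinct parts, is even; and if n is even, then D₂(n) ≡ q(n/2) (mod 2), where q(m) is the number of partitions of m into distinct parts. -/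
open scoped Classical

/-!
Interchanging the two colors is an involution on the partitions counted by `D₂(n)`, so `D₂(n)` is
congruent mod 2 to the number of its fixed points. A fixed point carries the same parts in both
colors, i.e. it is a partition of `n / 2` into distinct parts taken once in each color: there is
none for odd `n`, and there are `q(n / 2)` of them for even `n`.
-/

open Multiset Function

theorem Function.Involutive.card_fixedPoints_modEq {α : Type*} [Finite α] {f : α → α}
    (hf : Involutive f) : Nat.card α ≡ Nat.card (fixedPoints f) [MOD 2] := by
  have := Fintype.ofFinite α
  have hf2 : (show Function.End α from f) ^ 2 ^ 1 = 1 := funext hf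
  simpa only [Nat.card_eq_fintype_card] using
    Equiv.Perm.card_fixedPoints_modEq (p := 2) (n := 1) hf2

namespace ColoredPartition

variable {α : Type*}

def revColor {c : ℕ} (p : α × Fin c) : α × Fin c := (p.1, p.2.rev)

@[simp] lemma revColor_revColor {c : ℕ} (p : α × Fin c) : revColor (revColor p) = p := by
  simp [revColor]

@[simp] lemma fst_revColor {c : ℕ} (p : α × Fin c) : (revColor p).1 = p.1 := rfl

def bothColors (t : Multiset α) : Multiset (α × Fin 2) := t.map (·, 0) + t.map (·, 1)

lemma fst_mem_of_mem_bothColors {t : Multiset α} {p : α × Fin 2} (hp : p ∈ bothColors t) :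
    p.1 ∈ t := by
  rcases mem_add.1 hp with hp | hp <;>
    · obtain ⟨a, ha, rfl⟩ := mem_map.1 hp
      exact ha

lemma sum_fst_bothColors [AddCommMonoid α] (t : Multiset α) :
    ((bothColors t).map Prod.fst).sum = 2 • t.sum := by
  simp [bothColors, two_nsmul]

lemma nodup_bothColors {t : Multiset α} (ht : t.Nodup) : (bothColors t).Nodup := by
  refine nodup_add.2 ⟨ht.map fun _ _ h => congrArg Prod.fst h,
    ht.map fun _ _ h => congrArg Prod.fst h, ?_⟩
  simp [Multiset.disjoint_left]

lemma nodup_of_nodup_bothColors {t : Multiset α} (ht : (bothColors t).Nodup) : t.Nodup :=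
  (nodup_add.1 ht).1.of_map _

lemma map_revColor_bothColors (t : Multiset α) : (bothColors t).map revColor = bothColors t := by
  simp [bothColors, revColor, Function.comp_def, add_comm]

lemma fst_filter_bothColors (t : Multiset α) :
    ((bothColors t).filter (·.2 = 0)).map Prod.fst = t := by
  simp [bothColors, filter_map]

lemma eq_bothColors_of_map_revColor_eq {m : Multiset (α × Fin 2)} (h : m.map revColor = m) :
    m = bothColors ((m.filter (·.2 = 0)).map Prod.fst) := by
  set t := (m.filter (·.2 = 0)).map Prod.fst with ht
  have hcolor0 : t.map (·, (0 : Fin 2)) = m.filter (·.2 = 0) := by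
    rw [ht, map_map]
    conv_rhs => rw [← map_id (m.filter _)]
    exact map_congr rfl fun p hp => Prod.ext rfl (of_mem_filter hp).symm
  have hcolor1 : m.filter (¬ ·.2 = 0) = (m.filter (·.2 = 0)).map revColor := by
    conv_lhs => rw [← h]
    rw [filter_map]
    have hrev : ∀ i : Fin 2, ¬ i.rev = 0 ↔ i = 0 := by decide
    exact congrArg _ (filter_congr fun p _ => hrev p.2)
  calc m = m.filter (·.2 = 0) + m.filter (¬ ·.2 = 0) := (filter_add_not _ m).symm
    _ = bothColors t := by
      rw [hcolor1, ← hcolor0, map_map revColor]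
      rfl

lemma _root_.IsColoredPartition.map_revColor {c n : ℕ} {m : Multiset (ℕ × Fin c)}
    (hm : IsColoredPartition n m) : IsColoredPartition n (m.map revColor) := by
  refine ⟨fun p hp => ?_, ?_⟩
  · obtain ⟨q, hq, rfl⟩ := mem_map.1 hp
    exact hm.1 q hq
  · simpa [map_map, Function.comp_def] using hm.2

abbrev DistinctColoredPartition (c n : ℕ) : Type :=
  {m : Multiset (ℕ × Fin c) // IsColoredPartition n m ∧ m.Nodup}

namespace DistinctColoredPartition

instance (c n : ℕ) : Finite (DistinctColoredPartition c n) := by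
  refine Set.Finite.to_subtype (s := {m | IsColoredPartition n m ∧ m.Nodup}) ?_
  refine ((Finset.range (n + 1) ×ˢ Finset.univ).powerset.finite_toSet.image Finset.val).subset ?_
  rintro m ⟨⟨-, hsum⟩, hnd⟩
  refine ⟨⟨m, hnd⟩, Finset.mem_powerset.2 fun p hp => ?_, rfl⟩
  have : p.1 ≤ n := hsum ▸ le_sum_of_mem (mem_map_of_mem Prod.fst hp)
  simp [this]

def recolor {c n : ℕ} (x : DistinctColoredPartition c n) : DistinctColoredPartition c n :=
  ⟨x.1.map revColor, x.2.1.map_revColor,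
    x.2.2.map (Involutive.injective revColor_revColor)⟩

lemma recolor_involutive {c n : ℕ} : Involutive (recolor : DistinctColoredPartition c n → _) :=
  fun x => Subtype.ext <| by simp [recolor, map_map]

lemma eq_bothColors_of_isFixedPt {n : ℕ} {x : DistinctColoredPartition 2 n}
    (hx : IsFixedPt recolor x) : x.1 = bothColors ((x.1.filter (·.2 = 0)).map Prod.fst) :=
  eq_bothColors_of_map_revColor_eq (congrArg Subtype.val hx)

lemma even_of_isFixedPt {n : ℕ} {x : DistinctColoredPartition 2 n} (hx : IsFixedPt recolor x) :
    Even n := by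
  rw [← x.2.1.2, eq_bothColors_of_isFixedPt hx, sum_fst_bothColors, smul_eq_mul]
  exact even_two_mul _

def ofDistinctPartition {k : ℕ} (l : {l : k.Partition // l.parts.Nodup}) :
    DistinctColoredPartition 2 (2 * k) :=
  ⟨bothColors l.1.parts,
    ⟨fun p hp => l.1.parts_pos (fst_mem_of_mem_bothColors hp),
      by rw [sum_fst_bothColors, l.1.parts_sum, smul_eq_mul]⟩,
    nodup_bothColors l.2⟩

def toDistinctPartition {k : ℕ}
    (x : fixedPoints (recolor : DistinctColoredPartition 2 (2 * k) → _)) :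
    {l : k.Partition // l.parts.Nodup} :=
  have hx := eq_bothColors_of_isFixedPt x.2
  ⟨{ parts := (x.1.1.filter (·.2 = 0)).map Prod.fst
     parts_pos := fun hi => by
       obtain ⟨p, hp, rfl⟩ := mem_map.1 hi
       exact x.1.2.1.1 p (mem_of_mem_filter hp)
     parts_sum := by
       have hsum := x.1.2.1.2
       rw [hx, sum_fst_bothColors, smul_eq_mul] at hsum
       omega },
    nodup_of_nodup_bothColors (hx ▸ x.1.2.2)⟩

def fixedPointsEquiv (k : ℕ) :
    fixedPoints (recolor : DistinctColoredPartition 2 (2 * k) → _) ≃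
      {l : k.Partition // l.parts.Nodup} where
  toFun := toDistinctPartition
  invFun l := ⟨ofDistinctPartition l, Subtype.ext (map_revColor_bothColors _)⟩
  left_inv x := Subtype.ext <| Subtype.ext (eq_bothColors_of_isFixedPt x.2).symm
  right_inv _ := Subtype.ext <| Nat.Partition.ext (fst_filter_bothColors _)

end DistinctColoredPartition

end ColoredPartition

open ColoredPartition DistinctColoredPartition

lemma D1_eq_card_nodup (k : ℕ) : D1 k = Nat.card {l : k.Partition // l.parts.Nodup} := by
  rw [D1, Nat.card_eq_fintype_card, Fintype.card_subtype]
  rfl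

theorem stmt18 (n : ℕ) :
    (Odd n → Even (D2 n)) ∧ (Even n → D2 n ≡ D1 (n / 2) [MOD 2]) := by
  have hpar :
      D2 n ≡ Nat.card (fixedPoints (recolor : DistinctColoredPartition 2 n → _)) [MOD 2] :=
    recolor_involutive.card_fixedPoints_modEq
  refine ⟨fun hodd => ?_, fun heven => ?_⟩
  · have : IsEmpty (fixedPoints (recolor : DistinctColoredPartition 2 n → _)) :=
      ⟨fun x => Nat.not_even_iff_odd.2 hodd (even_of_isFixedPt x.2)⟩
    rw [Nat.card_of_isEmpty] at hpar
    exact Nat.even_iff.2 hpar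
  · obtain ⟨k, rfl⟩ := heven.two_dvd
    rw [Nat.mul_div_cancel_left k two_pos, D1_eq_card_nodup,
      ← Nat.card_congr (fixedPointsEquiv k)]
    exact hpar
end
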